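/- arXiv:2405.06797 — 4 statements merged into one kernel-verified Lean document; each statement's English description precedes it below -/
import Mathlib

section
/- For every n ≥ 1, in the n-bigger-number game, the profile in which both players play the pure strategy n−1 with probability 1 is a Nash equilibrium, and it is the unique Nash equilibrium: every Nash equilibrium (μ1, μ2) has both μ1 and μ2 equal to the point mass at n−1. -/
open Finset

namespace BiggerNumber

/-- Player 1's payoff in the `n`-bigger-number game: `0` if `a = b`, `2` if `a = b+1`,
`-2` if `b = a+1`, `1` if `a ≥ b+2`, and `-1` if `b ≥ a+2`. -/
noncomputable def u (a b : ℕ) : ℝ :=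
  if a = b then 0
  else if a = b + 1 then 2
  else if b = a + 1 then -2
  else if b + 2 ≤ a then 1
  else -1

/-- A mixed strategy: a probability distribution on `{0, …, n-1}`. -/
def IsMixed {n : ℕ} (μ : Fin n → ℝ) : Prop :=
  (∀ a, 0 ≤ μ a) ∧ ∑ a, μ a = 1

/-- Expected payoff to player 1. -/
noncomputable def U {n : ℕ} (μ1 μ2 : Fin n → ℝ) : ℝ :=
  ∑ a, ∑ b, μ1 a * μ2 b * u a.val b.val

/-- `(μ1, μ2)` is a Nash equilibrium of the (zero-sum) game. -/
def IsNash {n : ℕ} (μ1 μ2 : Fin n → ℝ) : Prop :=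
  IsMixed μ1 ∧ IsMixed μ2 ∧
  (∀ μ1', IsMixed μ1' → U μ1' μ2 ≤ U μ1 μ2) ∧
  (∀ μ2', IsMixed μ2' → U μ1 μ2 ≤ U μ1 μ2')

/-- The point mass at a pure strategy. -/
noncomputable def pointMass {n : ℕ} (a0 : Fin n) : Fin n → ℝ :=
  fun a => if a = a0 then 1 else 0

lemma u_self (a : ℕ) : u a a = 0 := by simp [u]

lemma u_neg {a c : ℕ} (h : a < c) : u a c < 0 := by
  unfold u; split_ifs <;> first | omega | norm_num

lemma u_pos {a b : ℕ} (h : b < a) : 0 < u a b := by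
  unfold u; split_ifs <;> first | omega | norm_num

lemma pointMass_mixed {n : ℕ} (a0 : Fin n) : IsMixed (pointMass a0) := by
  constructor
  · intro a; unfold pointMass; split_ifs <;> norm_num
  · simp [pointMass]

lemma U_pm_right {n : ℕ} (μ : Fin n → ℝ) (a0 : Fin n) :
    U μ (pointMass a0) = ∑ a, μ a * u a.val a0.val := by
  unfold U pointMass
  refine Finset.sum_congr rfl fun a _ => ?_
  rw [Finset.sum_eq_single a0]
  · simp
  · intro b _ hb; simp [hb]
  · simp

lemma U_pm_left {n : ℕ} (a0 : Fin n) (μ : Fin n → ℝ) :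
    U (pointMass a0) μ = ∑ b, μ b * u a0.val b.val := by
  unfold U pointMass
  rw [Finset.sum_eq_single a0]
  · refine Finset.sum_congr rfl fun b _ => ?_; ring_nf; simp
  · intro a _ ha
    refine Finset.sum_eq_zero fun b _ => ?_
    simp [ha]
  · simp

/-- In the `n`-bigger-number game, the profile where both players play the point
mass at `n-1` is the unique Nash equilibrium. -/
theorem bigger_number_unique_nash (n : ℕ) (hn : 1 ≤ n) :
    IsNash (pointMass (⟨n - 1, by omega⟩ : Fin n)) (pointMass ⟨n - 1, by omega⟩) ∧
    ∀ μ1 μ2 : Fin n → ℝ, IsNash μ1 μ2 →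
      μ1 = pointMass ⟨n - 1, by omega⟩ ∧ μ2 = pointMass ⟨n - 1, by omega⟩ := by
  set e : Fin n := ⟨n - 1, by omega⟩ with he
  have hval : ∀ a : Fin n, a.val ≤ n - 1 := fun a => by have := a.isLt; omega
  -- payoff facts
  have hle : ∀ a : Fin n, u a.val e.val ≤ 0 := by
    intro a
    rcases lt_or_eq_of_le (hval a) with h | h
    · exact le_of_lt (u_neg h)
    · rw [show (e.val = a.val) from h.symm, u_self]
  have hge : ∀ b : Fin n, 0 ≤ u e.val b.val := by
    intro b
    rcases lt_or_eq_of_le (hval b) with h | h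
    · exact le_of_lt (u_pos h)
    · rw [show (e.val = b.val) from h.symm, u_self]
  have hUee : U (pointMass e) (pointMass e) = 0 := by
    rw [U_pm_right]
    refine Finset.sum_eq_zero fun a _ => ?_
    unfold pointMass
    split_ifs with h
    · subst h; rw [u_self, mul_zero]
    · rw [zero_mul]
  -- against pointMass e, any mixed strategy gives ≤ 0 for player 1
  have key1 : ∀ μ : Fin n → ℝ, IsMixed μ → U μ (pointMass e) ≤ 0 := by
    intro μ hμ
    rw [U_pm_right]
    exact Finset.sum_nonpos fun a _ => mul_nonpos_of_nonneg_of_nonpos (hμ.1 a) (hle a)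
  have key2 : ∀ μ : Fin n → ℝ, IsMixed μ → 0 ≤ U (pointMass e) μ := by
    intro μ hμ
    rw [U_pm_left]
    exact Finset.sum_nonneg fun b _ => mul_nonneg (hμ.1 b) (hge b)
  constructor
  · exact ⟨pointMass_mixed e, pointMass_mixed e,
      fun μ1' h1' => by rw [hUee]; exact key1 μ1' h1',
      fun μ2' h2' => by rw [hUee]; exact key2 μ2' h2'⟩
  · rintro μ1 μ2 ⟨hm1, hm2, hbest1, hbest2⟩
    have hv1 : 0 ≤ U μ1 μ2 := le_trans (key2 μ2 hm2) (hbest1 (pointMass e) (pointMass_mixed e))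
    have hv2 : U μ1 μ2 ≤ 0 := le_trans (hbest2 (pointMass e) (pointMass_mixed e)) (key1 μ1 hm1)
    -- μ1: ∑ μ1 a * u a (n-1) ≥ 0 and each term ≤ 0
    have h1 : (0:ℝ) ≤ ∑ a, μ1 a * u a.val e.val := by
      rw [← U_pm_right]
      exact le_trans hv1 (hbest2 (pointMass e) (pointMass_mixed e))
    have h2 : (∑ b, μ2 b * u e.val b.val) ≤ 0 := by
      rw [← U_pm_left]
      exact le_trans (hbest1 (pointMass e) (pointMass_mixed e)) hv2
    have hz1 : ∀ a : Fin n, a ≠ e → μ1 a = 0 := by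
      intro a ha
      have hsum : ∑ a, μ1 a * u a.val e.val = 0 :=
        le_antisymm (Finset.sum_nonpos fun a _ =>
          mul_nonpos_of_nonneg_of_nonpos (hm1.1 a) (hle a)) h1
      have := (Finset.sum_eq_zero_iff_of_nonpos (fun a _ =>
        mul_nonpos_of_nonneg_of_nonpos (hm1.1 a) (hle a))).mp hsum a (Finset.mem_univ a)
      have hlt : a.val < n - 1 := by
        rcases lt_or_eq_of_le (hval a) with h | h
        · exact h
        · exact absurd (Fin.ext h) ha
      have hune : u a.val e.val ≠ 0 := ne_of_lt (u_neg hlt)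
      exact (mul_eq_zero.mp this).resolve_right hune
    have hz2 : ∀ b : Fin n, b ≠ e → μ2 b = 0 := by
      intro b hb
      have hsum : ∑ b, μ2 b * u e.val b.val = 0 :=
        le_antisymm h2 (Finset.sum_nonneg fun b _ => mul_nonneg (hm2.1 b) (hge b))
      have := (Finset.sum_eq_zero_iff_of_nonneg (fun b _ =>
        mul_nonneg (hm2.1 b) (hge b))).mp hsum b (Finset.mem_univ b)
      have hlt : b.val < n - 1 := by
        rcases lt_or_eq_of_le (hval b) with h | h
        · exact h
        · exact absurd (Fin.ext h) hb
      have hune : u e.val b.val ≠ 0 := (ne_of_lt (u_pos hlt)).symm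
      exact (mul_eq_zero.mp this).resolve_right hune
    have hone : ∀ (μ : Fin n → ℝ), IsMixed μ → (∀ a, a ≠ e → μ a = 0) →
        μ = pointMass e := by
      intro μ hμ hz
      funext a
      unfold pointMass
      split_ifs with h
      · subst h
        have := hμ.2
        rwa [Finset.sum_eq_single e (fun b _ hb => hz b hb) (by simp)] at this
      · exact hz a h
    exact ⟨hone μ1 hm1 hz1, hone μ2 hm2 hz2⟩

end BiggerNumber
end

section
/- In the n-bigger-number game with n ≥ 2, let μ1 be any mixed strategy of player 1 and let m be the maximum element of the support of μ1, with m ≤ n−2. Then every pure best response of player 2 to μ1 is at most m+1; in particular, for every b ≥ m+2, the pure strategy b gives player 2 expected payoff exactly 1 while m+1 gives player 2 expected payoff 1 + μ1(m) > 1. -/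
open Finset

namespace BiggerNumber

/-- Player 2's expected payoff from the pure strategy `b` against `μ1`. -/
noncomputable def P2pay {n : ℕ} (μ1 : Fin n → ℝ) (b : Fin n) : ℝ :=
  -∑ a, μ1 a * u a.val b.val

/-- Let `m ≤ n - 2` be the maximum of the support of a mixed strategy `μ1` of player 1
in the `n`-bigger-number game. Then every pure best response of player 2 to `μ1` is
at most `m + 1`; every pure strategy `b ≥ m + 2` gives player 2 expected payoff
exactly `1`; and `m + 1` gives player 2 expected payoff `1 + μ1 m > 1`. -/
theorem bigger_number_best_responses (n : ℕ) (hn : 2 ≤ n) (μ1 : Fin n → ℝ)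
    (hμ1 : IsMixed μ1) (m : ℕ) (hm : m ≤ n - 2)
    (hsupp : μ1 ⟨m, by omega⟩ ≠ 0)
    (hmax : ∀ a : Fin n, μ1 a ≠ 0 → a.val ≤ m) :
    (∀ b : Fin n, (∀ b' : Fin n, P2pay μ1 b' ≤ P2pay μ1 b) → b.val ≤ m + 1) ∧
    (∀ b : Fin n, m + 2 ≤ b.val → P2pay μ1 b = 1) ∧
    P2pay μ1 ⟨m + 1, by omega⟩ = 1 + μ1 ⟨m, by omega⟩ ∧
    1 < P2pay μ1 ⟨m + 1, by omega⟩ := by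
  obtain ⟨hpos, hsum⟩ := hμ1
  have hmn : m + 2 ≤ n := by omega
  have key2 : ∀ b : Fin n, m + 2 ≤ b.val → P2pay μ1 b = 1 := by
    intro b hb
    have hs : ∑ a, μ1 a * u a.val b.val = ∑ a : Fin n, -(μ1 a) := by
      apply Finset.sum_congr rfl
      intro a _
      rcases eq_or_ne (μ1 a) 0 with h | h
      · simp [h]
      · have ha := hmax a h
        have h1 : a.val ≠ b.val := by omega
        have h2 : a.val ≠ b.val + 1 := by omega
        have h3 : b.val ≠ a.val + 1 := by omega
        have h4 : ¬ (b.val + 2 ≤ a.val) := by omega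
        simp [u, h1, h2, h3, h4]
    rw [P2pay, hs, Finset.sum_neg_distrib, hsum]
    norm_num
  have key3 : P2pay μ1 ⟨m + 1, by omega⟩ = 1 + μ1 ⟨m, by omega⟩ := by
    have hs : ∑ a, μ1 a * u a.val (m + 1) =
        ∑ a : Fin n, (-(μ1 a) - if a = (⟨m, by omega⟩ : Fin n) then μ1 a else 0) := by
      apply Finset.sum_congr rfl
      intro a _
      rcases eq_or_ne a (⟨m, by omega⟩ : Fin n) with h | h
      · subst h
        have h1 : m ≠ m + 1 := by omega
        have h2 : m ≠ m + 1 + 1 := by omega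
        simp [u, h1, h2]
        ring
      · rcases eq_or_ne (μ1 a) 0 with h0 | h0
        · simp [h0, h]
        · have ha := hmax a h0
          have ha' : a.val ≠ m := by
            intro he
            exact h (Fin.ext he)
          have h1 : a.val ≠ m + 1 := by omega
          have h2 : a.val ≠ m + 1 + 1 := by omega
          have h3 : m + 1 ≠ a.val + 1 := by omega
          have h4 : ¬ (m + 1 + 2 ≤ a.val) := by omega
          simp [u, h1, h2, h3, h4, h, Ne.symm ha']
    have : P2pay μ1 ⟨m + 1, by omega⟩ =
        -(∑ a : Fin n, (-(μ1 a) - if a = (⟨m, by omega⟩ : Fin n) then μ1 a else 0)) := by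
      rw [P2pay, hs]
    rw [this, Finset.sum_sub_distrib, Finset.sum_neg_distrib, hsum,
      Finset.sum_ite_eq' Finset.univ (⟨m, by omega⟩ : Fin n) μ1]
    simp
    ring
  have hμm : 0 < μ1 ⟨m, by omega⟩ := lt_of_le_of_ne (hpos _) (Ne.symm hsupp)
  have key4 : 1 < P2pay μ1 ⟨m + 1, by omega⟩ := by rw [key3]; linarith
  refine ⟨?_, key2, key3, key4⟩
  intro b hb
  by_contra hbc
  push_neg at hbc
  have h1 := hb ⟨m + 1, by omega⟩
  rw [key2 b (by omega)] at h1
  linarith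

end BiggerNumber
end

section
/- In any n-incrementing game with parameters β > α > 0, for every t with 0 ≤ t ≤ n−1, every pure Nash equilibrium of the restriction of the game to {0,…,t} equals (t,t). Since u1(t,t)+u2(t,t) = 0 and all off-diagonal profiles have total payoff α − β < 0 or less, (t,t) is in particular the unique welfare-maximizing pure Nash equilibrium of the restricted game. -/
namespace Incrementing

/-- In any `n`-incrementing game with parameters `β > α > 0` (player 1's payoff `u1`
satisfies `u1 a b = α` if `a = b+1`, `-β` if `b = a+1`, `0` if `a = b`, and is negative
whenever `|a - b| ≥ 2`; player 2's payoff is `u2 a b = u1 b a`), for every `t`, every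
pure Nash equilibrium of the restriction of the game to `{0, …, t}` equals `(t, t)`.
Moreover `u1 t t + u2 t t = 0` while every off-diagonal profile has negative total
payoff, so `(t, t)` is in particular the unique welfare-maximizing pure Nash
equilibrium of the restricted game. -/
theorem incrementing_restricted_nash_unique (n : ℕ) (α β : ℝ)
    (hα : 0 < α) (hαβ : α < β)
    (u1 u2 : Fin n → Fin n → ℝ)
    (hu2 : ∀ a b, u2 a b = u1 b a)
    (hinc : ∀ a b : Fin n, a.val = b.val + 1 → u1 a b = α)
    (hdec : ∀ a b : Fin n, b.val = a.val + 1 → u1 a b = -β)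
    (hdiag : ∀ a : Fin n, u1 a a = 0)
    (hfar : ∀ a b : Fin n, a.val + 2 ≤ b.val ∨ b.val + 2 ≤ a.val → u1 a b < 0)
    (t : Fin n) :
    (∀ a b : Fin n, a.val ≤ t.val → b.val ≤ t.val →
      (∀ a' : Fin n, a'.val ≤ t.val → u1 a' b ≤ u1 a b) →
      (∀ b' : Fin n, b'.val ≤ t.val → u2 a b' ≤ u2 a b) →
      a = t ∧ b = t) ∧
    u1 t t + u2 t t = 0 ∧
    (∀ a b : Fin n, a ≠ b → u1 a b + u2 a b < 0) := by
  refine ⟨?_, by rw [hu2, hdiag]; ring, ?_⟩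
  · intro a b ha hb hA hB
    have key1 : b.val < t.val → a.val = b.val + 1 := by
      intro hbt
      have hlt : b.val + 1 < n := lt_of_le_of_lt hbt t.isLt
      have hAle : α ≤ u1 a b := by
        have := hA ⟨b.val + 1, hlt⟩ hbt
        rwa [hinc ⟨b.val + 1, hlt⟩ b rfl] at this
      by_contra h
      have hle : u1 a b ≤ 0 := by
        rcases Nat.lt_trichotomy a.val b.val with hc | hc | hc
        · rcases Nat.lt_or_ge (a.val + 1) b.val with hc' | hc'
          · exact le_of_lt (hfar a b (Or.inl hc'))
          · have : b.val = a.val + 1 := by omega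
            rw [hdec a b this]; linarith
        · have : a = b := Fin.ext hc
          rw [this, hdiag]
        · exact le_of_lt (hfar a b (Or.inr (by omega)))
      linarith
    have key2 : a.val < t.val → b.val = a.val + 1 := by
      intro hat
      have hlt : a.val + 1 < n := lt_of_le_of_lt hat t.isLt
      have hAle : α ≤ u1 b a := by
        have := hB ⟨a.val + 1, hlt⟩ hat
        rw [hu2, hu2] at this
        rwa [hinc ⟨a.val + 1, hlt⟩ a rfl] at this
      by_contra h
      have hle : u1 b a ≤ 0 := by
        rcases Nat.lt_trichotomy b.val a.val with hc | hc | hc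
        · rcases Nat.lt_or_ge (b.val + 1) a.val with hc' | hc'
          · exact le_of_lt (hfar b a (Or.inl hc'))
          · have : a.val = b.val + 1 := by omega
            rw [hdec b a this]; linarith
        · have : b = a := Fin.ext hc
          rw [this, hdiag]
        · exact le_of_lt (hfar b a (Or.inr (by omega)))
      linarith
    have hat : a.val = t.val := by
      by_contra h
      have hat' : a.val < t.val := lt_of_le_of_ne ha h
      have hb1 : b.val = a.val + 1 := key2 hat'
      rcases Nat.lt_or_ge b.val t.val with hbt | hbt
      · have := key1 hbt; omega
      · -- b = t, a < t, b = a+1; player 1 deviates to t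
        have hbteq : b = t := Fin.ext (le_antisymm hb hbt)
        have hd : u1 a b = -β := hdec a b hb1
        have := hA t (le_refl _)
        rw [hbteq, hdiag] at this
        rw [hbteq] at hd
        linarith
    have hbt : b.val = t.val := by
      by_contra h
      have hbt' : b.val < t.val := lt_of_le_of_ne hb h
      have ha1 : a.val = b.val + 1 := key1 hbt'
      have hateq : a = t := Fin.ext hat
      have hd : u2 a b = -β := by rw [hu2]; exact hdec b a ha1
      have h1 : u2 a t = 0 := by rw [hu2, hateq, hdiag]
      have h2 := hB t (le_refl _)
      rw [h1, hd] at h2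
      linarith
    exact ⟨Fin.ext hat, Fin.ext hbt⟩
  · intro a b hab
    rw [hu2]
    have hne : a.val ≠ b.val := fun h => hab (Fin.ext h)
    rcases Nat.lt_trichotomy a.val b.val with hc | hc | hc
    · rcases Nat.lt_or_ge (a.val + 1) b.val with hc' | hc'
      · have h1 := hfar a b (Or.inl hc')
        have h2 := hfar b a (Or.inr hc')
        linarith
      · have hb1 : b.val = a.val + 1 := by omega
        rw [hdec a b hb1, hinc b a hb1]; linarith
    · exact absurd hc hne
    · rcases Nat.lt_or_ge (b.val + 1) a.val with hc' | hc'
      · have h1 := hfar a b (Or.inr hc')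
        have h2 := hfar b a (Or.inl hc')
        linarith
      · have ha1 : a.val = b.val + 1 := by omega
        rw [hinc a b ha1, hdec b a ha1]; linarith

end Incrementing
end

section
/- In the k-state game with k ≥ 2, let 1 ≤ t ≤ 2^{k−1}, and let bin_k(s) denote the k-bit binary representation of s. If x ∈ {0,1}^k satisfies V(x, bin_k(t−1)) = 1, then the number s encoded by x in binary satisfies t−1 ≤ s ≤ 2^{k−1} − 1. -/
open Finset

namespace KState

/-- Matching pennies payoff: `1` if `a = b`, `-1` otherwise. -/
noncomputable def m (a b : Fin 2) : ℝ := if a = b then 1 else -1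

/-- Payoff at a non-matching-pennies state: `-1` if `(a, b) = (0, 1)`, `1` otherwise. -/
noncomputable def w (a b : Fin 2) : ℝ := if a = 0 ∧ b = 1 then -1 else 1

/-- Player 1's payoff in the `k`-state game:
`V x y = (1/k) (m x₁ y₁ + ∑_{j=2}^k w x_j y_j)`, where coordinate `1` corresponds to the
index `j = 0` of `Fin k`. Player 2's payoff is `-V x y`. -/
noncomputable def V (k : ℕ) (x y : Fin k → Fin 2) : ℝ :=
  (1 / (k : ℝ)) * ∑ j : Fin k, (if j.val = 0 then m (x j) (y j) else w (x j) (y j))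

/-- The `k`-bit binary representation of `s`, most significant bit first: the index
`j = 0` of `Fin k` holds the coefficient of `2^(k-1)`. -/
def bin (k s : ℕ) : Fin k → Fin 2 :=
  fun j => ⟨s / 2 ^ (k - 1 - j.val) % 2, Nat.mod_lt _ (by norm_num)⟩

/-- The number encoded in binary (most significant bit first) by `x ∈ {0,1}^k`. -/
def toNum {k : ℕ} (x : Fin k → Fin 2) : ℕ :=
  ∑ j : Fin k, (x j).val * 2 ^ (k - 1 - j.val)

lemma sum_two_pow (n : ℕ) : ∑ i ∈ Finset.range n, 2 ^ i = 2 ^ n - 1 := by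
  induction n with
  | zero => simp
  | succ n ih =>
    rw [Finset.sum_range_succ, ih]
    have : 1 ≤ 2 ^ n := Nat.one_le_two_pow
    have : 2 ^ (n + 1) = 2 * 2 ^ n := by ring
    omega

lemma sum_bits (s : ℕ) : ∀ n, ∑ i ∈ Finset.range n, s / 2 ^ i % 2 * 2 ^ i = s % 2 ^ n := by
  intro n
  induction n with
  | zero => simp [Nat.mod_one]
  | succ n ih =>
    rw [Finset.sum_range_succ, ih, pow_succ, Nat.mod_mul]
    ring

lemma toNum_bin (k s : ℕ) (hs : s < 2 ^ k) : toNum (bin k s) = s := by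
  unfold toNum bin
  rw [Fin.sum_univ_eq_sum_range (fun j => s / 2 ^ (k - 1 - j) % 2 * 2 ^ (k - 1 - j))]
  have h := Finset.sum_range_reflect (fun i => s / 2 ^ i % 2 * 2 ^ i) k
  rw [h, sum_bits, Nat.mod_eq_of_lt hs]

/-- In the `k`-state game with `1 ≤ t ≤ 2^(k-1)`: if a pure strategy `x` satisfies
`V x (bin k (t-1)) = 1`, then the number `s` encoded by `x` in binary satisfies
`t - 1 ≤ s ≤ 2^(k-1) - 1`. -/
theorem kstate_value_one_range (k t : ℕ) (hk : 2 ≤ k) (ht1 : 1 ≤ t)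
    (ht2 : t ≤ 2 ^ (k - 1)) :
    ∀ x : Fin k → Fin 2, V k x (bin k (t - 1)) = 1 →
      t - 1 ≤ toNum x ∧ toNum x ≤ 2 ^ (k - 1) - 1 := by
  intro x hV
  set y := bin k (t - 1) with hy
  set f : Fin k → ℝ := fun j => if j.val = 0 then m (x j) (y j) else w (x j) (y j) with hf
  have hk0 : (0 : ℕ) < k := by omega
  -- each term is ≤ 1 and is either 1 or -1
  have hle : ∀ j : Fin k, f j ≤ 1 := by
    intro j
    simp only [hf, m, w]
    split_ifs <;> norm_num
  have hval : ∀ j : Fin k, f j = 1 ∨ f j = -1 := by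
    intro j
    simp only [hf, m, w]
    split_ifs <;> simp
  -- the sum equals k
  have hsum : ∑ j : Fin k, f j = (k : ℝ) := by
    have hkne : (k : ℝ) ≠ 0 := by positivity
    have : (1 / (k : ℝ)) * ∑ j : Fin k, f j = 1 := hV
    field_simp at this
    linarith [this]
  -- hence every term equals 1
  have hone : ∀ j : Fin k, f j = 1 := by
    by_contra h
    push_neg at h
    obtain ⟨j₀, hj₀⟩ := h
    have hlt : f j₀ < 1 := by
      rcases hval j₀ with h1 | h1
      · exact absurd h1 hj₀
      · rw [h1]; norm_num
    have : ∑ j : Fin k, f j < ∑ _j : Fin k, (1 : ℝ) :=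
      Finset.sum_lt_sum (fun i _ => hle i) ⟨j₀, Finset.mem_univ _, hlt⟩
    rw [hsum] at this
    simp at this
  -- the top bit of y is 0
  have hyt : t - 1 < 2 ^ (k - 1) := by omega
  have hy0 : y ⟨0, hk0⟩ = 0 := by
    have : (t - 1) / 2 ^ (k - 1 - 0) % 2 = 0 := by
      rw [Nat.sub_zero, Nat.div_eq_of_lt hyt]
    exact Fin.ext (by simpa [hy, bin] using this)
  -- the top bit of x is 0
  have hx0 : x ⟨0, hk0⟩ = 0 := by
    by_contra hne
    have h1 := hone ⟨0, hk0⟩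
    simp [hf, m, hy0, hne] at h1
    norm_num at h1
  -- pointwise domination: y j ≤ x j
  have hdom : ∀ j : Fin k, (y j).val ≤ (x j).val := by
    intro j
    by_cases hj : j.val = 0
    · have hj' : j = ⟨0, hk0⟩ := Fin.ext hj
      rw [hj', hx0, hy0]
    · have h1 := hone j
      simp only [hf] at h1
      rw [if_neg hj] at h1
      simp only [w] at h1
      have hnw : ¬(x j = 0 ∧ y j = 1) := by
        intro hc
        rw [if_pos hc] at h1
        norm_num at h1
      revert hnw
      have : ∀ a b : Fin 2, ¬(a = 0 ∧ b = 1) → b.val ≤ a.val := by decide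
      exact this (x j) (y j)
  constructor
  · -- lower bound
    have hmono : toNum y ≤ toNum x := by
      unfold toNum
      exact Finset.sum_le_sum fun j _ => Nat.mul_le_mul_right _ (hdom j)
    have hbin : toNum y = t - 1 := by
      rw [hy]
      exact toNum_bin k (t - 1) (lt_of_lt_of_le hyt (Nat.pow_le_pow_right (by norm_num) (by omega)))
    omega
  · -- upper bound
    unfold toNum
    have hb : ∀ j : Fin k, (x j).val * 2 ^ (k - 1 - j.val) ≤
        if j.val = 0 then 0 else 2 ^ (k - 1 - j.val) := by
      intro j
      by_cases hj : j.val = 0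
      · have hj' : j = ⟨0, hk0⟩ := Fin.ext hj
        rw [if_pos hj, hj', hx0]
        simp
      · rw [if_neg hj]
        have : (x j).val ≤ 1 := by omega
        calc (x j).val * 2 ^ (k - 1 - j.val) ≤ 1 * 2 ^ (k - 1 - j.val) :=
              Nat.mul_le_mul_right _ this
          _ = 2 ^ (k - 1 - j.val) := one_mul _
    have hle2 : ∑ j : Fin k, (x j).val * 2 ^ (k - 1 - j.val) ≤
        ∑ j : Fin k, if j.val = 0 then 0 else 2 ^ (k - 1 - j.val) :=
      Finset.sum_le_sum fun j _ => hb j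
    have hcomp : (∑ j : Fin k, if j.val = 0 then 0 else 2 ^ (k - 1 - j.val)) =
        2 ^ (k - 1) - 1 := by
      rw [Fin.sum_univ_eq_sum_range (fun j => if j = 0 then 0 else 2 ^ (k - 1 - j))]
      obtain ⟨n, rfl⟩ : ∃ n, k = n + 1 := ⟨k - 1, by omega⟩
      rw [Finset.sum_range_succ' (fun j => if j = 0 then 0 else 2 ^ (n + 1 - 1 - j)) n]
      simp only [Nat.succ_ne_zero, if_neg, if_pos rfl, add_zero, Nat.add_sub_cancel]
      have hre : ∑ i ∈ Finset.range n, (2 : ℕ) ^ (n - (i + 1)) =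
          ∑ i ∈ Finset.range n, 2 ^ i := by
        have := Finset.sum_range_reflect (fun i => (2 : ℕ) ^ i) n
        rw [← this]
        refine Finset.sum_congr rfl fun i hi => ?_
        congr 1
        have := Finset.mem_range.mp hi
        omega
      calc ∑ i ∈ Finset.range n, (if i + 1 = 0 then 0 else 2 ^ (n - (i + 1)))
          = ∑ i ∈ Finset.range n, 2 ^ (n - (i + 1)) := by
            refine Finset.sum_congr rfl fun i _ => by simp
        _ = 2 ^ n - 1 := by rw [hre, sum_two_pow]
        _ = 2 ^ (n + 1 - 1) - 1 := by simp
    omega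

end KState
end
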